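/- For every M > 0, r > 0 and θ ∈ (0, π), the real quadratic form v ↦ vᵀ G_M(r,θ) v on ℝ⁴ is equivalent (as a quadratic form over ℝ) to the Minkowski form w ↦ −w₀² + w₁² + w₂² + w₃²; i.e. the Schwarzschild-star metric matrix has Lorentzian signature (1,3) at every such point, in particular at the horizon r = 2M. -/
import Mathlib


open Matrix

/-- The 4×4 matrix of the Schwarzschild exterior metric in Schwarzschild-star
coordinates (t*, r, θ, φ). -/
noncomputable def schwG (M r θ : ℝ) : Matrix (Fin 4) (Fin 4) ℝ :=
  !![-(1 - 2*M/r), 2*M/r, 0, 0;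
     2*M/r, 1 + 2*M/r, 0, 0;
     0, 0, r^2, 0;
     0, 0, 0, r^2 * Real.sin θ ^ 2]

set_option maxHeartbeats 2000000 in
/-- The quadratic form of the Schwarzschild-star metric matrix is equivalent
over ℝ to the Minkowski form: Lorentzian signature (1,3), including at the
horizon r = 2M. -/
theorem stmt_5 (M r θ : ℝ) (hM : 0 < M) (hr : 0 < r)
    (hθ : θ ∈ Set.Ioo 0 Real.pi) :
    ∃ L : (Fin 4 → ℝ) ≃ₗ[ℝ] (Fin 4 → ℝ),
      ∀ w : Fin 4 → ℝ,
        (L w) ⬝ᵥ (schwG M r θ *ᵥ (L w)) =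
          -(w 0)^2 + (w 1)^2 + (w 2)^2 + (w 3)^2 := by
  have hr' : r ≠ 0 := ne_of_gt hr
  have hs : Real.sin θ ≠ 0 :=
    ne_of_gt (Real.sin_pos_of_pos_of_lt_pi hθ.1 hθ.2)
  set μ : ℝ := 2*M/r with hμ
  set A : Matrix (Fin 4) (Fin 4) ℝ :=
    !![(2+μ)/2, μ/2, 0, 0;
       -μ/2, (2-μ)/2, 0, 0;
       0, 0, 1/r, 0;
       0, 0, 0, 1/(r * Real.sin θ)] with hA
  set B : Matrix (Fin 4) (Fin 4) ℝ :=
    !![(2-μ)/2, -(μ/2), 0, 0;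
       μ/2, (2+μ)/2, 0, 0;
       0, 0, r, 0;
       0, 0, 0, r * Real.sin θ] with hB
  have hInv : Invertible A := by
    refine ⟨B, ?_, ?_⟩ <;>
    · ext i j
      fin_cases i <;> fin_cases j <;>
        simp [hA, hB, Matrix.mul_apply, Fin.sum_univ_four, Matrix.one_apply,
          Matrix.vecHead, Matrix.vecTail] <;>
        (try field_simp) <;> ring
  have hG : schwG M r θ =
      !![-(1 - μ), μ, 0, 0;
         μ, 1 + μ, 0, 0;
         0, 0, r^2, 0;
         0, 0, 0, r^2 * Real.sin θ ^ 2] := by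
    rw [schwG, hμ]
  refine ⟨A.toLinearEquiv' hInv, fun w => ?_⟩
  have hL : A.toLinearEquiv' hInv w = A *ᵥ w := rfl
  rw [hL, hG]
  clear_value μ
  simp [hA, Matrix.mulVec, dotProduct, Fin.sum_univ_four,
    Matrix.vecHead, Matrix.vecTail]
  field_simp
  ring
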